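/- arXiv:1403.4480 — 3 statements merged into one kernel-verified Lean document; each statement's English description precedes it below -/
import Mathlib

section
/- Let L be a compact Hausdorff space, A ⊆ L a dense countably compact subset such that every nonempty Gδ subset of L meets A, and S ⊆ C(L, ℝ) a countable family of continuous real-valued functions separating the points of A. Then S separates the points of L. -/
/-- A set `S` of points of a topological space is countably compact (sequential
cluster-point version): every sequence in `S` has a cluster point in `S`. -/
def IsCountablyCompactSet {X : Type*} [TopologicalSpace X] (S : Set X) : Prop :=
  ∀ u : ℕ → X, (∀ n, u n ∈ S) → ∃ a ∈ S, MapClusterPt a Filter.atTop u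

lemma isGδ_preimage_aux {X Y : Type*} [TopologicalSpace X] [TopologicalSpace Y]
    {s : Set Y} (hs : IsGδ s) {f : X → Y} (hf : Continuous f) : IsGδ (f ⁻¹' s) := by
  obtain ⟨T, hTo, hTc, rfl⟩ := hs
  rw [Set.sInter_eq_biInter, Set.preimage_iInter₂]
  exact IsGδ.biInter hTc fun t ht => ((hTo t ht).preimage hf).isGδ

theorem countable_separating_family_on_dense_countablyCompact_separates_all
    {L : Type*} [TopologicalSpace L] [CompactSpace L] [T2Space L]
    (A : Set L) (hdense : Dense A) (hcc : IsCountablyCompactSet A)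
    (hGδ : ∀ G : Set L, IsGδ G → G.Nonempty → (G ∩ A).Nonempty)
    (S : Set C(L, ℝ)) (hScount : S.Countable)
    (hsep : ∀ x ∈ A, ∀ y ∈ A, x ≠ y → ∃ f ∈ S, f x ≠ f y) :
    ∀ x y : L, x ≠ y → ∃ f ∈ S, f x ≠ f y := by
  intro x y hxy
  by_contra hcon
  push_neg at hcon
  set F : Set L := ⋂ f ∈ S, (f : L → ℝ) ⁻¹' {f x} with hF
  have hFgδ : IsGδ F := IsGδ.biInter hScount fun f _ =>
    isGδ_preimage_aux (IsGδ.singleton _) f.continuous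
  have hxF : x ∈ F := by
    simp only [hF, Set.mem_iInter, Set.mem_preimage, Set.mem_singleton_iff]
    exact fun f hf => trivial
  have hyF : y ∈ F := by
    simp only [hF, Set.mem_iInter, Set.mem_preimage, Set.mem_singleton_iff]
    intro f hf; exact (hcon f hf).symm
  obtain ⟨a, haF, haA⟩ := hGδ F hFgδ ⟨x, hxF⟩
  have huniq : ∀ b ∈ F, b ∈ A → b = a := by
    intro b hbF hbA
    by_contra hb
    obtain ⟨f, hfS, hfne⟩ := hsep b hbA a haA hb
    have h1 : f b = f x := by
      have := Set.mem_iInter₂.1 hbF f hfS; simpa using this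
    have h2 : f a = f x := by
      have := Set.mem_iInter₂.1 haF f hfS; simpa using this
    exact hfne (h1.trans h2.symm)
  have hz : ∃ z ∈ F, z ≠ a := by
    rcases eq_or_ne x a with rfl | hxa
    · exact ⟨y, hyF, fun e => hxy e.symm⟩
    · exact ⟨x, hxF, hxa⟩
  obtain ⟨z, hzF, hza⟩ := hz
  have hGδ' : IsGδ (F ∩ {a}ᶜ) :=
    hFgδ.inter ((isOpen_compl_singleton).isGδ)
  obtain ⟨b, ⟨hbF, hba⟩, hbA⟩ := hGδ (F ∩ {a}ᶜ) hGδ' ⟨z, hzF, hza⟩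
  exact hba (huniq b hbF hbA)
end

section
/- In a compact Hausdorff space L, every nonempty Gδ subset of L contains a nonempty Gδ set of the form ∩_{n} {t : h_n(t) = c_n} for countably many continuous functions h_n and reals c_n; consequently, if A is a dense countably compact subset of L, then every nonempty Gδ subset of L meets A. -/
open Set Filter Topology

theorem gdelta_contains_functional_gdelta_and_meets_dense_countablyCompact
    {L : Type*} [TopologicalSpace L] [CompactSpace L] [T2Space L] :
    (∀ G : Set L, IsGδ G → G.Nonempty →
      ∃ (h : ℕ → C(L, ℝ)) (c : ℕ → ℝ),
        (⋂ n, {t : L | h n t = c n}).Nonempty ∧ (⋂ n, {t : L | h n t = c n}) ⊆ G) ∧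
    (∀ A : Set L, Dense A → IsCountablyCompactSet A →
      ∀ G : Set L, IsGδ G → G.Nonempty → (G ∩ A).Nonempty) := by
  constructor
  · intro G hG ⟨x, hx⟩
    obtain ⟨f, hfo, rfl⟩ := hG.eq_iInter_nat
    have hxn : ∀ n, x ∈ f n := fun n => mem_iInter.1 hx n
    have key : ∀ n, ∃ h : C(L, ℝ), h x = 0 ∧ ∀ t, h t = 0 → t ∈ f n := by
      intro n
      obtain ⟨h, h0, h1, -⟩ := exists_continuous_zero_one_of_isClosed
        (isClosed_singleton (x := x)) (hfo n).isClosed_compl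
        (disjoint_left.2 (by rintro y rfl; simp [hxn n]))
      refine ⟨h, h0 rfl, fun t ht => ?_⟩
      by_contra hc
      have := h1 hc
      simp only [Pi.one_apply] at this
      rw [ht] at this; norm_num at this
    choose h h0 hsub using key
    refine ⟨h, fun _ => 0, ⟨x, mem_iInter.2 fun n => h0 n⟩, fun t ht => ?_⟩
    exact mem_iInter.2 fun n => hsub n t (mem_iInter.1 ht n)
  · intro A hA hcc G hG ⟨x, hx⟩
    obtain ⟨f, hfo, rfl⟩ := hG.eq_iInter_nat
    have hxn : ∀ n, x ∈ f n := fun n => mem_iInter.1 hx n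
    -- regularity: shrink neighborhoods
    have key : ∀ s : Set L, s ∈ 𝓝 x → ∃ V : Set L, IsOpen V ∧ x ∈ V ∧ closure V ⊆ s := by
      intro s hs
      obtain ⟨t, ht, htc, hts⟩ := exists_mem_nhds_isClosed_subset hs
      exact ⟨interior t, isOpen_interior, mem_interior_iff_mem_nhds.2 ht,
        (closure_minimal interior_subset htc).trans hts⟩
    choose F hFo hFx hFc using key
    -- build decreasing sequence of open sets
    let T := {V : Set L // IsOpen V ∧ x ∈ V}
    let V : ℕ → T := fun n => Nat.rec
      (⟨F (f 0) ((hfo 0).mem_nhds (hxn 0)),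
        hFo _ _, hFx _ _⟩ : T)
      (fun n W => ⟨F (W.1 ∩ f (n+1))
          ((W.2.1.inter (hfo (n+1))).mem_nhds ⟨W.2.2, hxn (n+1)⟩),
        hFo _ _, hFx _ _⟩) n
    have hV0 : closure (V 0).1 ⊆ f 0 := hFc _ _
    have hVs : ∀ n, closure (V (n+1)).1 ⊆ (V n).1 ∩ f (n+1) := fun n => hFc _ _
    have hmono : ∀ m n, n ≤ m → (V m).1 ⊆ (V n).1 := by
      intro m
      induction m with
      | zero => intro n hn; rw [Nat.le_zero.1 hn]
      | succ m ih =>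
        intro n hn
        rcases Nat.lt_or_ge n (m+1) with h | h
        · exact (subset_closure.trans ((hVs m).trans inter_subset_left)).trans
            (ih n (Nat.lt_succ_iff.1 h))
        · rw [Nat.le_antisymm hn h]
    -- pick points of A in each V n
    have hne : ∀ n, ((V n).1 ∩ A).Nonempty := fun n =>
      hA.inter_open_nonempty _ (V n).2.1 ⟨x, (V n).2.2⟩
    choose u hu using hne
    obtain ⟨a, haA, hcl⟩ := hcc u (fun n => (hu n).2)
    have hclos : ∀ n, a ∈ closure (V n).1 := by
      intro n
      have hev : (V n).1 ∈ Filter.map u Filter.atTop := by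
        rw [Filter.mem_map]
        filter_upwards [Filter.eventually_ge_atTop n] with m hm
        exact hmono m n hm (hu m).1
      rw [mem_closure_iff_clusterPt]
      exact hcl.clusterPt.mono (Filter.le_principal_iff.2 hev)
    refine ⟨a, mem_iInter.2 fun n => ?_, haA⟩
    cases n with
    | zero => exact hV0 (hclos 0)
    | succ n => exact ((hVs n) (hclos (n+1))).2
end

section
/- Let E be a Banach space with norming subspace D ⊆ E* that is induced by a 1-projectional skeleton (P_s). Then for every s the projection P_s satisfies P_s* [E*] ⊆ D, and (P_s*)|_{B_{E*}} is a weak*-continuous retraction of (B_{E*}, w*) with metrizable compact range; hence D ∩ B_{E*} is induced by a retractional skeleton in (B_{E*}, w*). -/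
open Filter

/-- A 1-projectional skeleton in a Banach space `E`: norm-one bounded linear
projections with separable ranges, indexed by an up-directed poset, commuting
when comparable, stable under suprema of increasing sequences, converging
pointwise to the identity. -/
structure OneProjectionalSkeleton (E : Type*) [NormedAddCommGroup E]
    [NormedSpace ℝ E] (Γ : Type*) [PartialOrder Γ] [IsDirected Γ (· ≤ ·)]
    [Nonempty Γ] where
  P : Γ → E →L[ℝ] E
  norm_le_one : ∀ s, ‖P s‖ ≤ 1
  proj : ∀ s, (P s).comp (P s) = P s
  separable_range : ∀ s, TopologicalSpace.IsSeparable (Set.range (P s))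
  cover : ∀ x : E, ∃ s, P s x = x
  comm₁ : ∀ s t, s ≤ t → (P s).comp (P t) = P s
  comm₂ : ∀ s t, s ≤ t → (P t).comp (P s) = P s
  sup_seq : ∀ u : ℕ → Γ, StrictMono u →
    ∃ t : Γ, IsLUB (Set.range u) t ∧
      ∀ x, Tendsto (fun n => P (u n) x) atTop (nhds (P t x))
  tendsto_id : ∀ x : E, Tendsto (fun s => P s x) atTop (nhds x)

/-- The closed dual unit ball, as functionals that do not increase norms. -/
def WeakStarBall (E : Type*) [NormedAddCommGroup E] [NormedSpace ℝ E] : Type _ :=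
  {f : E →L[ℝ] ℝ // ‖f‖ ≤ 1}

/-- The weak* topology on the dual unit ball: induced by pointwise evaluation. -/
instance (E : Type*) [NormedAddCommGroup E] [NormedSpace ℝ E] :
    TopologicalSpace (WeakStarBall E) :=
  TopologicalSpace.induced (fun f : WeakStarBall E => fun x : E => f.1 x)
    inferInstance

/-- A retractional skeleton in a topological space `K`. -/
structure RetractionalSkeleton (K : Type*) [TopologicalSpace K]
    (Γ : Type*) [PartialOrder Γ] [IsDirected Γ (· ≤ ·)] [Nonempty Γ] where
  r : Γ → K → K
  continuous_r : ∀ s, Continuous (r s)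
  retraction : ∀ s, r s ∘ r s = r s
  compact_range : ∀ s, IsCompact (Set.range (r s))
  metrizable_range : ∀ s, TopologicalSpace.MetrizableSpace (Set.range (r s))
  comm₁ : ∀ s t, s ≤ t → r s ∘ r t = r s
  comm₂ : ∀ s t, s ≤ t → r t ∘ r s = r s
  sup_seq : ∀ u : ℕ → Γ, StrictMono u →
    ∃ t : Γ, IsLUB (Set.range u) t ∧
      ∀ x, Tendsto (fun n => r (u n) x) atTop (nhds (r t x))
  tendsto : ∀ x, Tendsto (fun s => r s x) atTop (nhds x)


open Topology

section AuxWSB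
variable {E : Type*} [NormedAddCommGroup E] [NormedSpace ℝ E]

lemma wsb_inducing : IsInducing (fun f : WeakStarBall E => fun x : E => f.1 x) := ⟨rfl⟩

lemma wsb_injective : Function.Injective (fun f : WeakStarBall E => fun x : E => f.1 x) := by
  intro f g h
  exact Subtype.ext (ContinuousLinearMap.ext fun x => congrFun h x)

lemma wsb_embedding : IsEmbedding (fun f : WeakStarBall E => fun x : E => f.1 x) :=
  ⟨wsb_inducing, wsb_injective⟩

instance : T2Space (WeakStarBall E) := wsb_embedding.t2Space

lemma wd_embedding : IsEmbedding ((↑) : WeakDual ℝ E → E → ℝ) :=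
  DFunLike.coe_injective.isEmbedding_induced

instance : CompactSpace (WeakStarBall E) := by
  have h1 := WeakDual.isCompact_closedBall (𝕜 := ℝ) (E := E) 0 1
  have h2 := wd_embedding.toIsInducing.isCompact_iff.mp h1
  refine ⟨wsb_inducing.isCompact_iff.2 ?_⟩
  rw [Set.image_univ]
  convert h2 using 1
  ext φ
  constructor
  · rintro ⟨f, rfl⟩
    exact ⟨f.1, by show WeakDual.toStrongDual f.1 ∈ Metric.closedBall 0 1; rw [mem_closedBall_zero_iff]; exact f.2, rfl⟩
  · rintro ⟨g, hg, rfl⟩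
    exact ⟨⟨g, by simp only [Set.mem_preimage, mem_closedBall_zero_iff] at hg; exact hg⟩, rfl⟩

lemma wsb_tendsto_iff {α : Type*} {l : Filter α} {g : α → WeakStarBall E} {a : WeakStarBall E} :
    Filter.Tendsto g l (nhds a) ↔
      ∀ x, Filter.Tendsto (fun i => (g i).1 x) l (nhds (a.1 x)) := by
  rw [wsb_inducing.tendsto_nhds_iff, tendsto_pi_nhds]
  rfl

end AuxWSB

section AuxRho
variable {E : Type*} [NormedAddCommGroup E] [NormedSpace ℝ E]
variable {Γ : Type*} [PartialOrder Γ] [IsDirected Γ (· ≤ ·)] [Nonempty Γ]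
variable (sk : OneProjectionalSkeleton E Γ)

noncomputable def rho (s : Γ) : WeakStarBall E → WeakStarBall E := fun f =>
  ⟨f.1.comp (sk.P s), by
    calc ‖f.1.comp (sk.P s)‖ ≤ ‖f.1‖ * ‖sk.P s‖ := ContinuousLinearMap.opNorm_comp_le _ _
    _ ≤ 1 * 1 := mul_le_mul f.2 (sk.norm_le_one s) (norm_nonneg _) zero_le_one
    _ = 1 := one_mul 1⟩

lemma rho_apply (s : Γ) (f : WeakStarBall E) : (rho sk s f).1 = f.1.comp (sk.P s) := rfl

lemma continuous_rho (s : Γ) : Continuous (rho sk s) := by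
  rw [wsb_inducing.continuous_iff]
  exact continuous_pi fun x =>
    (continuous_apply (sk.P s x)).comp wsb_inducing.continuous

lemma rho_comp_eq (s t w : Γ) (h : (sk.P t).comp (sk.P w) = sk.P s) :
    rho sk w ∘ rho sk t = rho sk s := by
  funext f
  refine Subtype.ext ?_
  show (f.1.comp (sk.P t)).comp (sk.P w) = f.1.comp (sk.P s)
  rw [ContinuousLinearMap.comp_assoc, h]

lemma compact_range_rho (s : Γ) : IsCompact (Set.range (rho sk s)) := by
  rw [← Set.image_univ]; exact isCompact_univ.image (continuous_rho sk s)

lemma metrizable_range_rho (s : Γ) :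
    TopologicalSpace.MetrizableSpace (Set.range (rho sk s)) := by
  obtain ⟨c, hc_count, hc_dense⟩ := sk.separable_range s
  haveI : Countable c := hc_count.to_subtype
  haveI : CompactSpace (Set.range (rho sk s)) :=
    isCompact_iff_compactSpace.mp (compact_range_rho sk s)
  set Φ : Set.range (rho sk s) → (c → ℝ) := fun g y => g.1.1 (y : E) with hΦ
  have hΦc : Continuous Φ := continuous_pi fun y =>
    ((continuous_apply (y : E)).comp wsb_inducing.continuous).comp continuous_subtype_val
  have hΦi : Function.Injective Φ := by
    rintro ⟨g, f₁, rfl⟩ ⟨h, f₂, rfl⟩ hgh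
    have h1 : Set.EqOn (⇑(f₁.1.comp (sk.P s))) (⇑(f₂.1.comp (sk.P s))) c := by
      intro y hy
      exact congrFun hgh ⟨y, hy⟩
    have h2 := h1.closure (f₁.1.comp (sk.P s)).continuous (f₂.1.comp (sk.P s)).continuous
    have hkey : ∀ x, (rho sk s f₁).1 x = (rho sk s f₂).1 x := by
      intro x
      have h3 : sk.P s x ∈ closure c := hc_dense ⟨x, rfl⟩
      have h4 := h2 h3
      have h5 : sk.P s (sk.P s x) = sk.P s x :=
        ContinuousLinearMap.ext_iff.mp (sk.proj s) x
      simpa [rho_apply, ContinuousLinearMap.comp_apply, h5] using h4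
    exact Subtype.ext (Subtype.ext (ContinuousLinearMap.ext hkey))
  haveI := (hΦc.isClosedEmbedding hΦi).toIsEmbedding.secondCountableTopology
  infer_instance

lemma tendsto_rho_of_tendsto {α : Type*} {l : Filter α} {g : α → Γ} {t : Γ}
    (h : ∀ x, Filter.Tendsto (fun i => sk.P (g i) x) l (nhds (sk.P t x)))
    (f : WeakStarBall E) :
    Filter.Tendsto (fun i => rho sk (g i) f) l (nhds (rho sk t f)) := by
  rw [wsb_tendsto_iff]
  intro x
  exact (f.1.continuous.tendsto _).comp (h x)

lemma tendsto_rho_id (f : WeakStarBall E) :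
    Filter.Tendsto (fun s => rho sk s f) atTop (nhds f) := by
  rw [wsb_tendsto_iff]
  intro x
  exact (f.1.continuous.tendsto _).comp (sk.tendsto_id x)

end AuxRho

theorem adjoints_of_projectional_skeleton_give_retractional_skeleton
    {E : Type*} [NormedAddCommGroup E] [NormedSpace ℝ E] [CompleteSpace E]
    {Γ : Type*} [PartialOrder Γ] [IsDirected Γ (· ≤ ·)] [Nonempty Γ]
    (sk : OneProjectionalSkeleton E Γ)
    (D : Set (E →L[ℝ] ℝ))
    (hD : D = ⋃ s, Set.range (fun f : E →L[ℝ] ℝ => f.comp (sk.P s))) :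
    (∀ (s : Γ) (f : E →L[ℝ] ℝ), f.comp (sk.P s) ∈ D) ∧
    (∀ s : Γ, ∃ ρ : WeakStarBall E → WeakStarBall E,
      (∀ f, (ρ f).1 = f.1.comp (sk.P s)) ∧ Continuous ρ ∧ ρ ∘ ρ = ρ ∧
      IsCompact (Set.range ρ) ∧
      TopologicalSpace.MetrizableSpace (Set.range ρ)) ∧
    (∃ sk' : RetractionalSkeleton (WeakStarBall E) Γ,
      (⋃ s, Set.range (sk'.r s)) = {f : WeakStarBall E | f.1 ∈ D}) := by
  have hmem : ∀ (s : Γ) (f : E →L[ℝ] ℝ), f.comp (sk.P s) ∈ D := by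
    intro s f
    rw [hD]
    exact Set.mem_iUnion.2 ⟨s, ⟨f, rfl⟩⟩
  refine ⟨hmem, ?_, ?_⟩
  · intro s
    exact ⟨rho sk s, fun f => rfl, continuous_rho sk s,
      rho_comp_eq sk s s s (sk.proj s), compact_range_rho sk s, metrizable_range_rho sk s⟩
  · refine ⟨⟨rho sk, continuous_rho sk, fun s => rho_comp_eq sk s s s (sk.proj s),
      compact_range_rho sk, metrizable_range_rho sk,
      fun s t h => rho_comp_eq sk s t s (sk.comm₂ s t h),
      fun s t h => rho_comp_eq sk s s t (sk.comm₁ s t h),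
      ?_, tendsto_rho_id sk⟩, ?_⟩
    · intro u hu
      obtain ⟨t, hlub, hconv⟩ := sk.sup_seq u hu
      exact ⟨t, hlub, fun f => tendsto_rho_of_tendsto sk hconv f⟩
    · ext f
      simp only [Set.mem_iUnion, Set.mem_range, Set.mem_setOf_eq]
      constructor
      · rintro ⟨s, g, rfl⟩
        exact hmem s g.1
      · intro hf
        rw [hD] at hf
        obtain ⟨s, h, hh⟩ := Set.mem_iUnion.1 hf
        refine ⟨s, f, ?_⟩
        apply Subtype.ext
        show f.1.comp (sk.P s) = f.1
        rw [← hh, ContinuousLinearMap.comp_assoc, sk.proj]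
end
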